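/- Let P and Q be longest paths in a finite simple graph G, let x be a common vertex of P and Q, and suppose there is a path R internally disjoint from V(P) ∪ V(Q) connecting an internal point of a segment of P incident to x with an internal point of a segment of Q incident to x (the two segments sharing the endpoint x). Then there exist two paths in G whose lengths sum to 2·L(P) + 2·L(R), contradicting maximality; hence no such path R exists. -/

import Mathlib

/-!
Split `sP` at `rx` and `sQ` at `ry`. Rerouting `P` from `x` along `sQ` to `ry`, back along `R`
to `rx` and on along `sP`, and symmetrically rerouting `Q` from `x` along `sP` to `rx`, along `R`
to `ry` and on along `sQ`, gives two paths: the segments meet the other path only at their ends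
and `R` meets `P ∪ Q` only at `rx` and `ry`. Together they use every edge of `P` and `Q` once
and `R` twice, so one of them is longer than the longest path it reroutes as soon as `R` has an
edge, which it does since `rx` lies off `Q` and `ry` on it.
-/

open SimpleGraph

/-- `p` is a longest path in `G`: it is a path and no path in `G` is longer. -/
def IsLongestPath {V : Type} (G : SimpleGraph V) {u v : V} (p : G.Walk u v) : Prop :=
  p.IsPath ∧ ∀ ⦃a b : V⦄ (q : G.Walk a b), q.IsPath → q.length ≤ p.length

namespace SimpleGraph.Walk

variable {V : Type*} {G : SimpleGraph V}

lemma IsPath.eq_of_mem_support_of_append {u v w y : V} {p : G.Walk u v} {q : G.Walk v w}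
    (hpq : (p.append q).IsPath) (hp : y ∈ p.support) (hq : y ∈ q.support) : y = v := by
  by_contra hne
  exact hpq.ne_of_mem_support_of_append hne hp hq rfl

lemma IsPath.append {u v w : V} {p : G.Walk u v} {q : G.Walk v w} (hp : p.IsPath)
    (hq : q.IsPath) (h : ∀ y ∈ p.support, y ∈ q.support → y = v) : (p.append q).IsPath := by
  have hq' := hq.support_nodup
  rw [← q.cons_tail_support, List.nodup_cons] at hq'
  rw [isPath_def, support_append, List.nodup_append]
  refine ⟨hp.support_nodup, hq'.2, ?_⟩
  rintro y hyp _ hyq rfl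
  have hyv : y = v := h y hyp (q.cons_tail_support ▸ List.mem_cons_of_mem _ hyq)
  exact hq'.1 (hyv ▸ hyq)

lemma IsPath.append_replace_middle {u x s t v : V} {a : G.Walk u x} {b : G.Walk x s}
    {d : G.Walk s v} {y : G.Walk x t} {r : G.Walk t s} (hP : (a.append (b.append d)).IsPath)
    (hy : y.IsPath) (hr : r.IsPath) (hxs : x ≠ s)
    (hyP : ∀ z ∈ y.support, z ∈ (a.append (b.append d)).support → z = x)
    (hrP : ∀ z ∈ r.support, z ∈ (a.append (b.append d)).support → z = s)
    (hry : ∀ z ∈ y.support, z ∈ r.support → z = t) :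
    (a.append (y.append (r.append d))).IsPath := by
  have hbd := hP.of_append_right
  have ha_d : ∀ z ∈ a.support, z ∉ d.support := by
    intro z hza hzd
    have hzx : z = x := hP.eq_of_mem_support_of_append hza (by simp [hzd])
    subst hzx
    exact hxs (hbd.eq_of_mem_support_of_append b.start_mem_support hzd)
  have mem_P : ∀ z, z ∈ a.support ∨ z ∈ d.support → z ∈ (a.append (b.append d)).support := by
    simp only [mem_support_append_iff]
    tauto
  have hrd : (r.append d).IsPath :=
    hr.append hbd.of_append_right fun z hzr hzd ↦ hrP z hzr (mem_P z (.inr hzd))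
  have hyrd : (y.append (r.append d)).IsPath := by
    refine hy.append hrd fun z hzy hzrd ↦ ?_
    rcases (mem_support_append_iff r d).mp hzrd with hzr | hzd
    · exact hry z hzy hzr
    · have hzx : z = x := hyP z hzy (mem_P z (.inr hzd))
      exact absurd (hzx ▸ hzd) (ha_d x a.end_mem_support)
  refine hP.of_append_left.append hyrd fun z hza hzyrd ↦ ?_
  simp only [mem_support_append_iff] at hzyrd
  rcases hzyrd with hzy | hzr | hzd
  · exact hyP z hzy (mem_P z (.inl hza))
  · have hzs : z = s := hrP z hzr (mem_P z (.inl hza))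
    exact absurd d.start_mem_support (hzs ▸ ha_d z hza)
  · exact absurd hzd (ha_d z hza)

lemma IsPath.eq_start_of_mem_support_left {x s w : V} {b : G.Walk x s} {e : G.Walk s w}
    (h : (b.append e).IsPath) (hsw : s ≠ w) {S : List V}
    (hseg : ∀ z ∈ (b.append e).support, z ∈ S → z = x ∨ z = w) :
    ∀ z ∈ b.support, z ∈ S → z = x := by
  intro z hzb hzS
  refine (hseg z (by simp [hzb]) hzS).resolve_right ?_
  rintro rfl
  exact hsw (h.eq_of_mem_support_of_append hzb e.end_mem_support).symm

end SimpleGraph.Walk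

theorem no_connection_between_adjacent_segments_general {V : Type}
    (G : SimpleGraph V) {u v c d x w z rx ry : V}
    (p1 : G.Walk u x) (sP : G.Walk x w) (p2 : G.Walk w v)
    (q1 : G.Walk c x) (sQ : G.Walk x z) (q2 : G.Walk z d)
    (hp : IsLongestPath G (p1.append (sP.append p2)))
    (hq : IsLongestPath G (q1.append (sQ.append q2)))
    (hsegP : ∀ y ∈ sP.support, y ∈ (q1.append (sQ.append q2)).support → y = x ∨ y = w)
    (hsegQ : ∀ y ∈ sQ.support, y ∈ (p1.append (sP.append p2)).support → y = x ∨ y = z)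
    (hrx : rx ∈ sP.support) (hrxx : rx ≠ x) (hrxw : rx ≠ w)
    (hry : ry ∈ sQ.support) (hryx : ry ≠ x) (hryz : ry ≠ z)
    (r : G.Walk rx ry) (hr : r.IsPath)
    (hint : ∀ y ∈ r.support, y ≠ rx → y ≠ ry →
      y ∉ (p1.append (sP.append p2)).support ∧ y ∉ (q1.append (sQ.append q2)).support) :
    False := by
  have hrx_Q : rx ∉ (q1.append (sQ.append q2)).support := fun h ↦ (hsegP rx hrx h).elim hrxx hrxw
  have hry_P : ry ∉ (p1.append (sP.append p2)).support := fun h ↦ (hsegQ ry hry h).elim hryx hryz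
  have hrP : ∀ y ∈ r.support, y ∈ (p1.append (sP.append p2)).support → y = rx :=
    fun y hy hyP ↦ by_contra fun hne ↦ (hint y hy hne (by rintro rfl; exact hry_P hyP)).1 hyP
  have hrQ : ∀ y ∈ r.support, y ∈ (q1.append (sQ.append q2)).support → y = ry :=
    fun y hy hyQ ↦ by_contra fun hne ↦ (hint y hy (by rintro rfl; exact hrx_Q hyQ) hne).2 hyQ
  have hr_pos : 0 < r.length := by
    refine Nat.pos_of_ne_zero fun h ↦ hrx_Q ?_
    rw [Walk.eq_of_length_eq_zero h]
    simp [hry]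
  obtain ⟨sP1, sP2, rfl⟩ := sP.mem_support_iff_exists_append.mp hrx
  obtain ⟨sQ1, sQ2, rfl⟩ := sQ.mem_support_iff_exists_append.mp hry
  have hsP1Q := hp.1.of_append_right.of_append_left.eq_start_of_mem_support_left hrxw hsegP
  have hsQ1P := hq.1.of_append_right.of_append_left.eq_start_of_mem_support_left hryz hsegQ
  simp only [← Walk.append_assoc] at hp hq hrP hrQ hsP1Q hsQ1P
  have hP' : (p1.append (sQ1.append (r.reverse.append (sP2.append p2)))).IsPath :=
    hp.1.append_replace_middle (hq.1.of_append_right.of_append_left)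
      hr.reverse hrxx.symm hsQ1P (fun y hy hyP ↦ hrP y (by simpa using hy) hyP)
      fun y hy hyr ↦ hrQ y (by simpa using hyr) (by simp [hy])
  have hQ' : (q1.append (sP1.append (r.append (sQ2.append q2)))).IsPath :=
    hq.1.append_replace_middle (hp.1.of_append_right.of_append_left)
      hr hryx.symm hsP1Q hrQ fun y hy hyr ↦ hrP y hyr (by simp [hy])
  have hP'_le := hp.2 _ hP'
  have hQ'_le := hq.2 _ hQ'
  simp only [Walk.length_append, Walk.length_reverse] at hP'_le hQ'_le
  omega

/-- Let `P = p₁ + sP + p₂` and `Q = q₁ + sQ + q₂` be longest paths, where `sP` and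
`sQ` are segments of `P` resp. `Q` incident to the common vertex `x` (their interior
vertices avoid the other path).  If `R` is a path from an internal point `rx` of `sP`
to an internal point `ry` of `sQ`, internally disjoint from `V(P) ∪ V(Q)`, then one
could build two paths whose lengths sum to `2·L(P) + 2·L(R)`, contradicting
maximality; hence no such path `R` exists. -/
theorem no_connection_between_adjacent_segments {V : Type} [Fintype V]
    (G : SimpleGraph V) {u v c d x w z rx ry : V}
    (p1 : G.Walk u x) (sP : G.Walk x w) (p2 : G.Walk w v)
    (q1 : G.Walk c x) (sQ : G.Walk x z) (q2 : G.Walk z d)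
    (hp : IsLongestPath G (p1.append (sP.append p2)))
    (hq : IsLongestPath G (q1.append (sQ.append q2)))
    (hsegP : ∀ y ∈ sP.support, y ∈ (q1.append (sQ.append q2)).support → y = x ∨ y = w)
    (hsegQ : ∀ y ∈ sQ.support, y ∈ (p1.append (sP.append p2)).support → y = x ∨ y = z)
    (hrx : rx ∈ sP.support) (hrxx : rx ≠ x) (hrxw : rx ≠ w)
    (hry : ry ∈ sQ.support) (hryx : ry ≠ x) (hryz : ry ≠ z)
    (r : G.Walk rx ry) (hr : r.IsPath)
    (hint : ∀ y ∈ r.support, y ≠ rx → y ≠ ry →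
      y ∉ (p1.append (sP.append p2)).support ∧ y ∉ (q1.append (sQ.append q2)).support) :
    False :=
  no_connection_between_adjacent_segments_general G p1 sP p2 q1 sQ q2 hp hq hsegP hsegQ hrx hrxx
    hrxw hry hryx hryz r hr hint
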